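/- For the cyclic operator τ₂ on H ⊗ H one has the square formula τ₂²(h¹ ⊗ h²) = Σ S(h²₍₂₎) σ ⊗ S̃(h²₍₁₎) S̃²(h¹) σ, i.e. τ₂²(h¹ ⊗ h²) = (Δ S̃(h²)) · (σ ⊗ S̃²(h¹) σ), where · denotes componentwise multiplication in H ⊗ H. -/

import Mathlib

open scoped TensorProduct
open Coalgebra

set_option maxHeartbeats 1000000

/-- The `δ`-twisted antipode `S̃(h) = Σ δ(h₍₁₎) S(h₍₂₎)` of a Hopf algebra `H`
with character `δ : H → k`. -/
noncomputable def twistedAntipode (k H : Type) [Field k] [Ring H] [HopfAlgebra k H]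
    (δ : H →ₐ[k] k) : H →ₗ[k] H :=
  (TensorProduct.lid k H).toLinearMap
    ∘ₗ TensorProduct.map δ.toLinearMap (HopfAlgebra.antipode (R := k))
    ∘ₗ Coalgebra.comul

/-- The cyclic operator `τ₂` on `H ⊗ H`:
`τ₂(h¹ ⊗ h²) = (Δ S̃(h¹)) · (h² ⊗ σ) = Σ S(h¹₍₂₎) h² ⊗ S̃(h¹₍₁₎) σ`, where `·` is
the componentwise multiplication of `H ⊗ H`. -/
noncomputable def tau2 (k H : Type) [Field k] [Ring H] [HopfAlgebra k H]
    (δ : H →ₐ[k] k) (σ : H) : H ⊗[k] H →ₗ[k] H ⊗[k] H :=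
  LinearMap.mul' k (H ⊗[k] H)
    ∘ₗ TensorProduct.map (Coalgebra.comul ∘ₗ twistedAntipode k H δ)
        ((TensorProduct.mk k H H).flip σ)


section Conv

variable {k : Type} [Field k] {C A : Type} [AddCommGroup C] [Module k C] [Coalgebra k C]
  [Ring A] [Algebra k A]

/-- Convolution product on `Hom(C, A)`. -/
noncomputable def conv (f g : C →ₗ[k] A) : C →ₗ[k] A :=
  LinearMap.mul' k A ∘ₗ TensorProduct.map f g ∘ₗ Coalgebra.comul

lemma conv_repr (f g : C →ₗ[k] A) {x : C} {ι : Type*} (r : Coalgebra.Repr k x ι) :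
    conv f g x = ∑ i ∈ r.index, f (r.left i) * g (r.right i) := by
  simp only [conv, LinearMap.comp_apply, ← r.eq, map_sum, TensorProduct.map_tmul,
    LinearMap.mul'_apply]

/-- The unit for convolution. -/
noncomputable def cunit : C →ₗ[k] A := Algebra.linearMap k A ∘ₗ Coalgebra.counit

lemma sum_smul_counit {x : C} {ι : Type*} (r : Coalgebra.Repr k x ι) :
    ∑ i ∈ r.index, (counit (R := k) (r.right i)) • r.left i = x := by
  have h := congrArg (TensorProduct.rid k C).toLinearMap (sum_tmul_counit_eq r)
  rw [map_sum] at h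
  simp only [LinearEquiv.coe_toLinearMap, TensorProduct.rid_tmul, one_smul] at h
  exact h

lemma sum_counit_smul {x : C} {ι : Type*} (r : Coalgebra.Repr k x ι) :
    ∑ i ∈ r.index, (counit (R := k) (r.left i)) • r.right i = x := by
  have h := congrArg (TensorProduct.lid k C).toLinearMap (sum_counit_tmul_eq r)
  rw [map_sum] at h
  simp only [LinearEquiv.coe_toLinearMap, TensorProduct.lid_tmul, one_smul] at h
  exact h

lemma conv_cunit (f : C →ₗ[k] A) : conv f cunit = f := by
  ext x
  rw [conv_repr f cunit (ℛ k x)]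
  simp only [cunit, LinearMap.comp_apply, Algebra.linearMap_apply, Algebra.algebraMap_eq_smul_one,
    mul_smul_comm, mul_one]
  have : ∑ i ∈ (ℛ k x).index, counit (R := k) ((ℛ k x).right i) • f ((ℛ k x).left i)
      = f (∑ i ∈ (ℛ k x).index, counit (R := k) ((ℛ k x).right i) • (ℛ k x).left i) := by
    rw [map_sum]; simp_rw [map_smul]
  rw [this, sum_smul_counit]

lemma cunit_conv (f : C →ₗ[k] A) : conv cunit f = f := by
  ext x
  rw [conv_repr cunit f (ℛ k x)]
  simp only [cunit, LinearMap.comp_apply, Algebra.linearMap_apply, Algebra.algebraMap_eq_smul_one,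
    smul_mul_assoc, one_mul]
  have : ∑ i ∈ (ℛ k x).index, counit (R := k) ((ℛ k x).left i) • f ((ℛ k x).right i)
      = f (∑ i ∈ (ℛ k x).index, counit (R := k) ((ℛ k x).left i) • (ℛ k x).right i) := by
    rw [map_sum]; simp_rw [map_smul]
  rw [this, _root_.sum_counit_smul]

lemma conv_assoc (f g h : C →ₗ[k] A) : conv (conv f g) h = conv f (conv g h) := by
  ext x
  set r := ℛ k x with hr
  set r₁ : ∀ i : r.ι, Coalgebra.Repr k (r.left i) (C × C) := fun i => ℛ k (r.left i) with hr₁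
  set r₂ : ∀ i : r.ι, Coalgebra.Repr k (r.right i) (C × C) := fun i => ℛ k (r.right i) with hr₂
  have key := congrArg (LinearMap.mul' k A ∘ₗ TensorProduct.map f
    (LinearMap.mul' k A ∘ₗ TensorProduct.map g h)) (sum_tmul_tmul_eq r r₁ r₂)
  simp only [map_sum, LinearMap.comp_apply, TensorProduct.map_tmul,
    LinearMap.mul'_apply] at key
  rw [conv_repr _ h r, conv_repr f _ r]
  simp only [conv_repr f g (r₁ _), conv_repr g h (r₂ _), Finset.sum_mul, Finset.mul_sum]
  simpa only [mul_assoc] using key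

lemma algHom_comp_conv {B : Type} [Ring B] [Algebra k B] (g : A →ₐ[k] B) (f h : C →ₗ[k] A) :
    g.toLinearMap ∘ₗ conv f h = conv (g.toLinearMap ∘ₗ f) (g.toLinearMap ∘ₗ h) := by
  ext x
  simp only [LinearMap.comp_apply, conv_repr _ _ (ℛ k x), map_sum, map_mul,
    AlgHom.toLinearMap_apply]

lemma algHom_comp_cunit {B : Type} [Ring B] [Algebra k B] (g : A →ₐ[k] B) :
    g.toLinearMap ∘ₗ (cunit : C →ₗ[k] A) = cunit := by
  ext x
  simp [cunit]

/-- Uniqueness of inverses in the convolution monoid. -/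
lemma conv_left_right_unique {a x b : C →ₗ[k] A} (h₁ : conv a x = cunit)
    (h₂ : conv x b = cunit) : a = b := by
  have : conv a (conv x b) = conv (conv a x) b := (conv_assoc a x b).symm
  rw [h₁, h₂, conv_cunit, cunit_conv] at this
  exact this

end Conv

section Hopf

variable {k H : Type} [Field k] [Ring H] [HopfAlgebra k H]

open HopfAlgebra

local notation "S" => antipode (R := k) (A := H)

lemma conv_antipode_id : conv S LinearMap.id = (cunit : H →ₗ[k] H) := by
  ext x
  rw [conv_repr _ _ (ℛ k x)]
  simp [cunit, sum_antipode_mul_eq_algebraMap_counit, sum_mul_antipode_eq_algebraMap_counit]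

lemma conv_id_antipode : conv LinearMap.id S = (cunit : H →ₗ[k] H) := by
  ext x
  rw [conv_repr _ _ (ℛ k x)]
  simp [cunit, sum_antipode_mul_eq_algebraMap_counit, sum_mul_antipode_eq_algebraMap_counit]

/-- An explicit `Repr` of `comul (x ⊗ₜ y)` built from reprs of `x` and `y`. -/
noncomputable def tmulRepr (x y : H) : Coalgebra.Repr k (x ⊗ₜ[k] y) ((H × H) × (H × H)) where
  index := (ℛ k x).index ×ˢ (ℛ k y).index
  left := fun p => (ℛ k x).left p.1 ⊗ₜ[k] (ℛ k y).left p.2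
  right := fun p => (ℛ k x).right p.1 ⊗ₜ[k] (ℛ k y).right p.2
  eq := by
    rw [Finset.sum_product]
    have : CoalgebraStruct.comul (R := k) (x ⊗ₜ[k] y)
        = TensorProduct.tensorTensorTensorComm k H H H H
            (TensorProduct.map comul comul (x ⊗ₜ[k] y)) := rfl
    rw [this, TensorProduct.map_tmul, ← (ℛ k x).eq, ← (ℛ k y).eq]
    rw [TensorProduct.sum_tmul]
    rw [map_sum]
    refine Finset.sum_congr rfl fun i _ => ?_
    rw [TensorProduct.tmul_sum, map_sum]
    refine Finset.sum_congr rfl fun j _ => ?_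
    rw [TensorProduct.tensorTensorTensorComm_tmul]

/-- A `Repr` of `x * y` built from reprs of `x` and `y`. -/
noncomputable def mulRepr (x y : H) : Coalgebra.Repr k (x * y) ((H × H) × (H × H)) where
  index := (ℛ k x).index ×ˢ (ℛ k y).index
  left := fun p => (ℛ k x).left p.1 * (ℛ k y).left p.2
  right := fun p => (ℛ k x).right p.1 * (ℛ k y).right p.2
  eq := by
    rw [Finset.sum_product, Bialgebra.comul_mul, ← (ℛ k x).eq, ← (ℛ k y).eq,
      Finset.sum_mul_sum]
    refine Finset.sum_congr rfl fun i _ => Finset.sum_congr rfl fun j _ => ?_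
    rw [Algebra.TensorProduct.tmul_mul_tmul]

lemma antipode_mul_antidistrib (x y : H) : S (x * y) = S y * S x := by
  -- work in the convolution monoid Hom(H ⊗ H, H)
  set M : H ⊗[k] H →ₗ[k] H := LinearMap.mul' k H with hM
  set P : H ⊗[k] H →ₗ[k] H :=
    LinearMap.mul' k H ∘ₗ TensorProduct.map S S ∘ₗ (TensorProduct.comm k H H).toLinearMap with hP
  have h1 : conv P M = cunit := by
    refine TensorProduct.ext' fun a b => ?_
    rw [conv_repr _ _ (tmulRepr a b)]
    simp only [tmulRepr, hP, hM, LinearMap.comp_apply, LinearEquiv.coe_toLinearMap,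
      TensorProduct.comm_tmul, TensorProduct.map_tmul, LinearMap.mul'_apply]
    rw [Finset.sum_product_right]
    have step1 : ∑ j ∈ (ℛ k b).index, ∑ i ∈ (ℛ k a).index,
          S ((ℛ k b).left j) * S ((ℛ k a).left i) *
            ((ℛ k a).right i * (ℛ k b).right j)
        = ∑ j ∈ (ℛ k b).index, S ((ℛ k b).left j) *
            ((∑ i ∈ (ℛ k a).index, S ((ℛ k a).left i) * (ℛ k a).right i) *
              (ℛ k b).right j) := by
      refine Finset.sum_congr rfl fun j _ => ?_
      rw [Finset.sum_mul, Finset.mul_sum]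
      exact Finset.sum_congr rfl fun i _ => by simp only [mul_assoc]
    rw [step1, sum_antipode_mul_eq_algebraMap_counit]
    simp_rw [← mul_assoc, ← Algebra.commutes (counit (R := k) a), mul_assoc]
    rw [← Finset.mul_sum, sum_antipode_mul_eq_algebraMap_counit, ← map_mul]
    simp [cunit]
    exact Algebra.commutes _ _
  have h2 : conv M (S ∘ₗ M) = cunit := by
    refine TensorProduct.ext' fun a b => ?_
    rw [conv_repr _ _ (tmulRepr a b)]
    simp only [tmulRepr, hM, LinearMap.comp_apply, TensorProduct.map_tmul,
      LinearMap.mul'_apply]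
    have := sum_mul_antipode_eq_algebraMap_counit (R := k) (mulRepr a b)
    simp only [mulRepr] at this
    rw [this]
    simp only [cunit, LinearMap.comp_apply, Algebra.linearMap_apply,
      TensorProduct.counit_tmul, smul_eq_mul, mul_comm, TensorProduct.map_tmul, LinearMap.mul'_apply,
      Bialgebra.counit_mul]
  have h3 : P = S ∘ₗ M := conv_left_right_unique h1 h2
  have := congrArg (fun f : H ⊗[k] H →ₗ[k] H => f (x ⊗ₜ[k] y)) h3
  simpa [hP, hM] using this.symm

end Hopf

section Twisted

variable {k H : Type} [Field k] [Ring H] [HopfAlgebra k H] (δ : H →ₐ[k] k) (σ : H)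

open HopfAlgebra

local notation "S" => antipode (R := k) (A := H)
local notation "St" => twistedAntipode k H δ

lemma twistedAntipode_repr {x : H} {ι : Type*} (r : Coalgebra.Repr k x ι) :
    St x = ∑ i ∈ r.index, δ (r.left i) • S (r.right i) := by
  simp only [twistedAntipode, LinearMap.comp_apply, ← r.eq, map_sum, TensorProduct.map_tmul,
    LinearEquiv.coe_toLinearMap, TensorProduct.lid_tmul, AlgHom.toLinearMap_apply]

lemma twistedAntipode_mul_antidistrib (x y : H) : St (x * y) = St y * St x := by
  rw [twistedAntipode_repr δ (mulRepr x y), twistedAntipode_repr δ (ℛ k x),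
    twistedAntipode_repr δ (ℛ k y)]
  simp only [mulRepr, Finset.sum_product, map_mul, _root_.antipode_mul_antidistrib]
  rw [Finset.sum_mul_sum, Finset.sum_comm]
  refine Finset.sum_congr rfl fun j _ => Finset.sum_congr rfl fun i _ => ?_
  simp only [smul_mul_assoc, mul_smul_comm, smul_smul]
  try rw [mul_comm (δ ((ℛ k x).left i)) (δ ((ℛ k y).left j))]

/-- `p : x ↦ x ⊗ 1`. -/
noncomputable abbrev pmap : H →ₗ[k] H ⊗[k] H := (TensorProduct.mk k H H).flip 1

/-- `q : x ↦ 1 ⊗ x`. -/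
noncomputable abbrev qmap : H →ₗ[k] H ⊗[k] H := TensorProduct.mk k H H 1

lemma conv_pmap_qmap : conv (pmap (k := k) (H := H)) qmap = Coalgebra.comul := by
  ext x
  rw [conv_repr _ _ (ℛ k x)]
  simp only [pmap, qmap, TensorProduct.mk_apply, LinearMap.flip_apply,
    Algebra.TensorProduct.tmul_mul_tmul, one_mul, mul_one]
  exact (ℛ k x).eq

lemma conv_comulS_comul :
    conv (Coalgebra.comul ∘ₗ S) (Coalgebra.comul (R := k) (A := H)) = cunit := by
  have hD : (Bialgebra.comulAlgHom k H).toLinearMap = Coalgebra.comul := rfl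
  have := algHom_comp_conv (Bialgebra.comulAlgHom k H) S LinearMap.id
  rw [conv_antipode_id, algHom_comp_cunit, hD, LinearMap.comp_id] at this
  exact this.symm

lemma conv_qmap_qmapS :
    conv (qmap (k := k) (H := H)) (qmap ∘ₗ S) = cunit := by
  ext x
  rw [conv_repr _ _ (ℛ k x)]
  simp only [qmap, LinearMap.comp_apply, TensorProduct.mk_apply,
    Algebra.TensorProduct.tmul_mul_tmul, one_mul]
  rw [← TensorProduct.tmul_sum, sum_mul_antipode_eq_algebraMap_counit]
  simp [cunit, Algebra.algebraMap_eq_smul_one, TensorProduct.tmul_smul,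
    Algebra.TensorProduct.one_def]

lemma conv_comulS_pmap :
    conv (Coalgebra.comul ∘ₗ S) (pmap (k := k) (H := H)) = qmap ∘ₗ S := by
  have h1 : conv (conv (Coalgebra.comul ∘ₗ S) (pmap (k := k) (H := H))) qmap = cunit := by
    rw [conv_assoc, conv_pmap_qmap, conv_comulS_comul]
  exact conv_left_right_unique h1 conv_qmap_qmapS

/-- `uδ : x ↦ δ(x) • 1`. -/
noncomputable abbrev udel : H →ₗ[k] H ⊗[k] H :=
  Algebra.linearMap k (H ⊗[k] H) ∘ₗ δ.toLinearMap

lemma conv_udel_comulS :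
    conv (udel δ) (Coalgebra.comul ∘ₗ S) = Coalgebra.comul ∘ₗ St := by
  ext x
  rw [conv_repr _ _ (ℛ k x)]
  simp only [udel, LinearMap.comp_apply, Algebra.linearMap_apply, AlgHom.toLinearMap_apply,
    Algebra.algebraMap_eq_smul_one, smul_mul_assoc, one_mul]
  rw [twistedAntipode_repr δ (ℛ k x), map_sum]
  simp only [map_smul]

lemma conv_udel_qmapS :
    conv (udel δ) (qmap ∘ₗ S) = qmap ∘ₗ St := by
  ext x
  rw [conv_repr _ _ (ℛ k x)]
  simp only [udel, qmap, LinearMap.comp_apply, Algebra.linearMap_apply,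
    AlgHom.toLinearMap_apply, Algebra.algebraMap_eq_smul_one, smul_mul_assoc, one_mul,
    TensorProduct.mk_apply]
  rw [twistedAntipode_repr δ (ℛ k x), TensorProduct.tmul_sum]
  simp only [TensorProduct.tmul_smul]

/-- `c : x ↦ ε(x) • (σ ⊗ σ)`. -/
noncomputable abbrev cmap : H →ₗ[k] H ⊗[k] H :=
  LinearMap.toSpanSingleton k (H ⊗[k] H) (σ ⊗ₜ[k] σ) ∘ₗ Coalgebra.counit

/-- `u' : x ↦ (x σ) ⊗ σ`. -/
noncomputable abbrev umap : H →ₗ[k] H ⊗[k] H :=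
  (TensorProduct.mk k H H).flip σ ∘ₗ LinearMap.mulRight k σ

lemma conv_pmap_cmap : conv (pmap (k := k) (H := H)) (cmap σ) = umap σ := by
  ext x
  rw [conv_repr _ _ (ℛ k x)]
  have h := congrArg (umap (k := k) (H := H) σ) (sum_smul_counit (ℛ k x))
  rw [map_sum] at h
  simp only [map_smul] at h
  rw [← h]
  refine Finset.sum_congr rfl fun i _ => ?_
  simp only [pmap, cmap, umap, LinearMap.comp_apply, LinearMap.flip_apply,
    TensorProduct.mk_apply, LinearMap.toSpanSingleton_apply, LinearMap.mulRight_apply,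
    mul_smul_comm, Algebra.TensorProduct.tmul_mul_tmul, one_mul]

lemma conv_qmapSt_cmap :
    conv (qmap ∘ₗ St) (cmap σ)
      = TensorProduct.mk k H H σ ∘ₗ LinearMap.mulRight k σ ∘ₗ St := by
  ext x
  rw [conv_repr _ _ (ℛ k x)]
  have h := congrArg (TensorProduct.mk k H H σ ∘ₗ LinearMap.mulRight k σ ∘ₗ
      twistedAntipode k H δ) (sum_smul_counit (ℛ k x))
  rw [map_sum] at h
  simp only [map_smul] at h
  rw [LinearMap.comp_apply, LinearMap.comp_apply] at h ⊢
  rw [← h]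
  refine Finset.sum_congr rfl fun i _ => ?_
  simp only [qmap, cmap, LinearMap.comp_apply, TensorProduct.mk_apply,
    LinearMap.toSpanSingleton_apply, LinearMap.mulRight_apply, mul_smul_comm,
    Algebra.TensorProduct.tmul_mul_tmul, one_mul, map_smul]

lemma key_lemma :
    conv (Coalgebra.comul ∘ₗ St) (umap σ)
      = TensorProduct.mk k H H σ ∘ₗ LinearMap.mulRight k σ ∘ₗ St := by
  rw [← conv_udel_comulS, ← conv_pmap_cmap, conv_assoc, ← conv_assoc (Coalgebra.comul ∘ₗ S),
    conv_comulS_pmap, ← conv_assoc, conv_udel_qmapS, conv_qmapSt_cmap]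

lemma key_lemma_repr {x : H} {ι : Type*} (r : Coalgebra.Repr k x ι) :
    ∑ i ∈ r.index, Coalgebra.comul (St (r.left i)) * (((r.right i) * σ) ⊗ₜ[k] σ)
      = σ ⊗ₜ[k] (St x * σ) := by
  have := congrArg (fun f : H →ₗ[k] H ⊗[k] H => f x) (key_lemma δ σ)
  simp only [LinearMap.comp_apply, TensorProduct.mk_apply, LinearMap.mulRight_apply] at this
  rw [← this, conv_repr _ _ r]
  simp only [LinearMap.comp_apply, umap, LinearMap.flip_apply, TensorProduct.mk_apply,
    LinearMap.mulRight_apply]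

end Twisted

/-- For a modular pair `(δ, σ)`, the square of the cyclic operator `τ₂` on `H ⊗ H`
is given by `τ₂²(h¹ ⊗ h²) = (Δ S̃(h²)) · (σ ⊗ S̃²(h¹) σ)`, i.e.
`τ₂²(h¹ ⊗ h²) = Σ S(h²₍₂₎) σ ⊗ S̃(h²₍₁₎) S̃²(h¹) σ`. -/
theorem tau2_sq (k H : Type) [Field k] [Ring H] [HopfAlgebra k H]
    (δ : H →ₐ[k] k) (σ : H)
    (hgrouplike : Coalgebra.comul (R := k) σ = σ ⊗ₜ[k] σ)
    (hcounit : Coalgebra.counit (R := k) σ = 1)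
    (hmodular : δ σ = 1)
    (h₁ h₂ : H) :
    tau2 k H δ σ (tau2 k H δ σ (h₁ ⊗ₜ[k] h₂))
      = Coalgebra.comul (twistedAntipode k H δ h₂)
          * (σ ⊗ₜ[k] (twistedAntipode k H δ (twistedAntipode k H δ h₁) * σ)) := by
  have tau2_app : ∀ x y : H, tau2 k H δ σ (x ⊗ₜ[k] y)
      = Coalgebra.comul (twistedAntipode k H δ x) * (y ⊗ₜ[k] σ) := by
    intro x y
    simp only [tau2, LinearMap.comp_apply, TensorProduct.map_tmul, LinearMap.mul'_apply,
      LinearMap.flip_apply, TensorProduct.mk_apply]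
  rw [tau2_app h₁ h₂]
  set r := ℛ k (twistedAntipode k H δ h₁) with hrdef
  rw [← r.eq, Finset.sum_mul]
  have e1 : ∀ i ∈ r.index, (r.left i ⊗ₜ[k] r.right i) * (h₂ ⊗ₜ[k] σ)
      = (r.left i * h₂) ⊗ₜ[k] (r.right i * σ) := fun i _ =>
    Algebra.TensorProduct.tmul_mul_tmul _ _ _ _
  rw [Finset.sum_congr rfl e1, map_sum]
  have e2 : ∀ i ∈ r.index, tau2 k H δ σ ((r.left i * h₂) ⊗ₜ[k] (r.right i * σ))
      = Coalgebra.comul (twistedAntipode k H δ h₂) *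
          (Coalgebra.comul (twistedAntipode k H δ (r.left i)) * ((r.right i * σ) ⊗ₜ[k] σ)) := by
    intro i _
    rw [tau2_app, twistedAntipode_mul_antidistrib, Bialgebra.comul_mul, mul_assoc]
  rw [Finset.sum_congr rfl e2, ← Finset.mul_sum]
  rw [key_lemma_repr δ σ r]
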